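/- arXiv:1111.1999 — 5 statements merged into one kernel-verified Lean document; each statement's English description precedes it below -/
import Mathlib

section
/- Let W : ℕ → A be an infinite word and u a nonempty finite word. Then every factor of W of length u.length is a cyclic shift of u if and only if W is purely periodic with the period equal to its prefix of length u.length (i.e., ∀ i, W (i + u.length) = W i) and that prefix is a cyclic shift of u. -/
/-- Extension of a morphism `φ : A → List B` to finite words: `φ†(w) = (w.map φ).flatten`. -/
def applyMorph {A B : Type*} (φ : A → List B) (w : List A) : List B :=
  (w.map φ).flatten

/-- The finite word `v` occurs in the infinite word `W` at starting position `i`. -/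
def OccursAt {A : Type*} (v : List A) (W : ℕ → A) (i : ℕ) : Prop :=
  ∀ (j : ℕ) (hj : j < v.length), W (i + j) = v.get ⟨j, hj⟩

/-- The finite word `v` is a factor of the infinite word `W`. -/
def FactorOf {A : Type*} (v : List A) (W : ℕ → A) : Prop :=
  ∃ i, OccursAt v W i

/-- The finite word `v` is a prefix of the infinite word `W`. -/
def PrefixOf {A : Type*} (v : List A) (W : ℕ → A) : Prop :=
  OccursAt v W 0

/-- `W` is uniformly recurrent. -/
def UniformlyRecurrent {A : Type*} (W : ℕ → A) : Prop :=
  ∀ u, FactorOf u W → ∃ N, ∀ v, FactorOf v W → v.length = N → u <:+: v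

/-- `W` is eventually periodic. -/
def EventuallyPeriodic {A : Type*} (W : ℕ → A) : Prop :=
  ∃ k t : ℕ, 1 ≤ t ∧ ∀ i, k ≤ i → W (i + t) = W i

/-- The substitution `φ` is prolongable over the letter `a₁`. -/
def Prolongable {A : Type*} (φ : A → List A) (a₁ : A) : Prop :=
  ∃ v, φ a₁ = a₁ :: v ∧ ∀ k : ℕ, (applyMorph φ)^[k] v ≠ []

/-- The morphism `φ` is nonerasing. -/
def Nonerasing {A B : Type*} (φ : A → List B) : Prop :=
  ∀ a, φ a ≠ []

/-- `X` is the fixed point `φ^∞(a₁)`: every `φ^n([a₁])` is a prefix of `X`. -/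
def IsFixedPoint {A : Type*} (φ : A → List A) (a₁ : A) (X : ℕ → A) : Prop :=
  ∀ n : ℕ, PrefixOf ((applyMorph φ)^[n] [a₁]) X

/-- `W` is the infinite word `ψ(φ^∞(a₁))`: the words `ψ(φ^n([a₁]))` have unbounded
length and each of them is a prefix of `W`. -/
def IsMorphicWord {A B : Type*} (φ : A → List A) (ψ : A → List B) (a₁ : A)
    (W : ℕ → B) : Prop :=
  (∀ N : ℕ, ∃ k : ℕ, N ≤ (applyMorph ψ ((applyMorph φ)^[k] [a₁])).length) ∧
  ∀ k : ℕ, PrefixOf (applyMorph ψ ((applyMorph φ)^[k] [a₁])) W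

/-- The letter `a` is `φ`-growing: `n ↦ (φ^n [a]).length` is unbounded. -/
def GrowingLetter {A : Type*} (φ : A → List A) (a : A) : Prop :=
  ∀ N : ℕ, ∃ n : ℕ, N ≤ ((applyMorph φ)^[n] [a]).length

/-- The finite word `w` is `φ`-bounded: the sequence `n ↦ φ^n(w)` is eventually periodic. -/
def PhiBounded {A : Type*} (φ : A → List A) (w : List A) : Prop :=
  ∃ n₀ p : ℕ, 1 ≤ p ∧ ∀ n, n₀ ≤ n → (applyMorph φ)^[n + p] w = (applyMorph φ)^[n] w

/-- Letter `a` has growth order `(d, θ)` with respect to `φ`. -/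
def HasGrowthOrder {A : Type*} (φ : A → List A) (a : A) (d : ℕ) (θ : ℝ) : Prop :=
  1 ≤ θ ∧ ∃ c C : ℝ, 0 < c ∧ c ≤ C ∧ ∀ n : ℕ, 1 ≤ n →
    c * (n : ℝ) ^ d * θ ^ n ≤ (((applyMorph φ)^[n] [a]).length : ℝ) ∧
    (((applyMorph φ)^[n] [a]).length : ℝ) ≤ C * (n : ℝ) ^ d * θ ^ n

/-- The substitution `φ` is primitive. -/
def PrimitiveSubst {A : Type*} (φ : A → List A) : Prop :=
  ∃ k : ℕ, 1 ≤ k ∧ ∀ a b : A, b ∈ (applyMorph φ)^[k] [a]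

/-- `v` is a cyclic shift of `u`. -/
def IsCyclicShift {A : Type*} (v u : List A) : Prop :=
  ∃ x y : List A, u = x ++ y ∧ v = y ++ x

/-- `W` is purely periodic with (nonempty) period `u`. -/
def PurelyPeriodicWith {A : Type*} (W : ℕ → A) (u : List A) : Prop :=
  ∃ hu : u ≠ [], ∀ i : ℕ, W i = u.get ⟨i % u.length, Nat.mod_lt i (List.length_pos_iff.mpr hu)⟩

/-- `W` is recurrent: every factor occurs at arbitrarily large starting positions. -/
def RecurrentWord {A : Type*} (W : ℕ → A) : Prop :=
  ∀ u, FactorOf u W → ∀ N : ℕ, ∃ i, N ≤ i ∧ OccursAt u W i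

/-- The letter `a` is recurrent: it occurs in some `φ^k [a]`, `k ≥ 1`. -/
def RecurrentLetter {A : Type*} (φ : A → List A) (a : A) : Prop :=
  ∃ k : ℕ, 1 ≤ k ∧ a ∈ (applyMorph φ)^[k] [a]

/-!
Two consecutive windows `W[i, i+n)` and `W[i+1, i+n+1)` that are both rotations of `u` are
permutations of each other; cancelling their common part `W[i+1, i+n)` forces
`W (i + n) = W i`. Conversely, if `W` is `n`-periodic, the window of length `n` at position `i`
is the prefix of length `n` rotated by `i % n`.
-/

def window {A : Type*} (W : ℕ → A) (i n : ℕ) : List A :=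
  List.ofFn fun j : Fin n => W (i + j)

section
variable {A : Type*}

theorem isCyclicShift_iff_isRotated {v u : List A} : IsCyclicShift v u ↔ u ~r v := by
  constructor
  · rintro ⟨x, y, rfl, rfl⟩
    exact List.isRotated_append
  · rintro ⟨n, rfl⟩
    exact ⟨_, _, (List.take_append_drop (n % u.length) u).symm,
      List.rotate_eq_drop_append_take_mod⟩

@[simp] theorem length_window (W : ℕ → A) (i n : ℕ) : (window W i n).length = n := by
  simp [window]

theorem occursAt_window (W : ℕ → A) (i n : ℕ) : OccursAt (window W i n) W i := by
  intro j hj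
  simp [window]

theorem OccursAt.eq_window {v : List A} {W : ℕ → A} {i : ℕ} (h : OccursAt v W i) :
    v = window W i v.length :=
  List.ext_getElem (by simp) fun j hj _ => by simp [window, h j hj]

theorem eq_of_cons_perm_cons {a b : A} {l : List A} (h : (a :: l).Perm (b :: l)) : a = b :=
  (Multiset.cons_inj_left (l : Multiset A)).mp (Multiset.coe_eq_coe.mpr h)

theorem eq_of_window_perm_window_succ {W : ℕ → A} {i n : ℕ}
    (h : (window W i n).Perm (window W (i + 1) n)) : W (i + n) = W i := by
  cases n with
  | zero => rfl
  | succ m =>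
    have hl : window W i (m + 1) = W i :: window W (i + 1) m := by
      simp [window, List.ofFn_succ, Nat.add_assoc, Nat.add_comm 1]
    have hr : window W (i + 1) (m + 1) = window W (i + 1) m ++ [W (i + (m + 1))] := by
      rw [window, List.ofFn_succ', List.concat_eq_append]
      simp [window, Nat.add_right_comm i 1, Nat.add_assoc]
    rw [hl, hr] at h
    exact (eq_of_cons_perm_cons (h.trans (List.perm_append_singleton _ _))).symm

theorem Function.Periodic.window_eq_rotate {W : ℕ → A} {n : ℕ} (hW : Function.Periodic W n)
    (i : ℕ) : window W i n = (window W 0 n).rotate (i % n) :=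
  List.ext_getElem (by simp) fun k _ _ => by
    simp [window, List.getElem_rotate, Nat.add_comm k i, ← hW.map_mod_nat (i + k)]

end

theorem factors_cyclic_shifts_iff_purely_periodic_general {A : Type*} (W : ℕ → A)
    (u : List A) :
    (∀ v : List A, FactorOf v W → v.length = u.length → IsCyclicShift v u) ↔
    ((∀ i : ℕ, W (i + u.length) = W i) ∧
      IsCyclicShift (List.ofFn fun i : Fin u.length => W i) u) := by
  have window_zero : window W 0 u.length = List.ofFn fun i : Fin u.length => W i := by
    simp [window]
  simp only [isCyclicShift_iff_isRotated, ← window_zero]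
  constructor
  · intro h
    have hrot : ∀ i, u ~r window W i u.length := fun i =>
      h _ ⟨i, occursAt_window W i _⟩ (length_window W i _)
    exact ⟨fun i => eq_of_window_perm_window_succ ((hrot i).symm.trans (hrot (i + 1))).perm,
      hrot 0⟩
  · rintro ⟨hper, hprefix⟩ v ⟨i, hi⟩ hlen
    have hW : Function.Periodic W u.length := hper
    rw [hi.eq_window, hlen, hW.window_eq_rotate i]
    exact hprefix.trans ⟨_, rfl⟩

/-- all factors of length `|u|` are cyclic shifts of `u` iff the word
is purely periodic with period its prefix of length `|u|`, that prefix being a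
cyclic shift of `u`. -/
theorem factors_cyclic_shifts_iff_purely_periodic {A : Type*} (W : ℕ → A)
    (u : List A) (hu : u ≠ []) :
    (∀ v : List A, FactorOf v W → v.length = u.length → IsCyclicShift v u) ↔
    ((∀ i : ℕ, W (i + u.length) = W i) ∧
      IsCyclicShift (List.ofFn fun i : Fin u.length => W i) u) :=
  factors_cyclic_shifts_iff_purely_periodic_general W u
end

section
/- Let W and H be infinite words over an alphabet B such that H is uniformly recurrent and every factor of H is a factor of W. Then W is uniformly recurrent if and only if every factor of W is a factor of H. -/
section Factors

variable {B : Type*}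

lemma factorOf_ofFn (W : ℕ → B) (i N : ℕ) :
    FactorOf (List.ofFn fun j : Fin N => W (i + j)) W :=
  ⟨i, fun j hj => by simp⟩

lemma FactorOf.of_infix {u v : List B} {W : ℕ → B} (h : u <:+: v) (hv : FactorOf v W) :
    FactorOf u W := by
  obtain ⟨s, t, rfl⟩ := h
  obtain ⟨i, hi⟩ := hv
  refine ⟨i + s.length, fun j hj => ?_⟩
  have hj' : s.length + j < (s ++ u ++ t).length := by simp only [List.length_append]; omega
  rw [Nat.add_assoc, hi (s.length + j) hj']
  simp [hj]

lemma UniformlyRecurrent.factorOf_of_factors_subset {W H : ℕ → B} (hW : UniformlyRecurrent W)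
    (hsub : ∀ u : List B, FactorOf u H → FactorOf u W) {u : List B} (hu : FactorOf u W) :
    FactorOf u H := by
  obtain ⟨N, hN⟩ := hW u hu
  have hprefix := factorOf_ofFn H 0 N
  exact FactorOf.of_infix (hN _ (hsub _ hprefix) List.length_ofFn) hprefix

lemma UniformlyRecurrent.of_factors_subset {W H : ℕ → B} (hH : UniformlyRecurrent H)
    (hsub : ∀ u : List B, FactorOf u W → FactorOf u H) : UniformlyRecurrent W := by
  intro u hu
  obtain ⟨N, hN⟩ := hH u (hsub u hu)
  exact ⟨N, fun v hv hlen => hN v (hsub v hv) hlen⟩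

end Factors

/-- comparison with a uniformly recurrent word whose factors all
occur in `W`. -/
theorem unifRec_iff_factors_subset {B : Type*} (W H : ℕ → B)
    (hH : UniformlyRecurrent H)
    (hsub : ∀ u : List B, FactorOf u H → FactorOf u W) :
    UniformlyRecurrent W ↔ ∀ u : List B, FactorOf u W → FactorOf u H :=
  ⟨fun hW _ hu => hW.factorOf_of_factors_subset hsub hu, hH.of_factors_subset⟩
end

section
/- Let φ be a nonerasing substitution on a finite alphabet A that is prolongable over a letter a₁. If the set of φ-bounded factors of the fixed point φ^∞(a₁) is infinite, then there exists a nonempty finite word U such that for every k : ℕ the k-fold concatenation U^k is a factor of φ^∞(a₁). -/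
/-!
Replace `φ` by a power `σ = φ^N` with `σ(σ(b)) = σ(b)` for every bounded letter `b`; this
changes neither the fixed point nor the bounded letters. Call `g` a right pump if, for some
`p ≥ 1`, the last growing letter of `σ^p(g)` is `g` itself, followed by a nonempty bounded word
`s`: then `σ^(kp)(g)` ends with `g s σ(s)^(k-1)`, so every power of `σ(s)` is a factor, and
symmetrically on the left. Without pumps, the bounded tail after the last growing letter of
`σ^j(c)` has length bounded in `j`: the last growing letter eventually runs through a cycle, and
the cycle contributes nothing. Desubstituting level by level, a bounded word between two
growing letters consists of such a right tail, the image of a word shorter than `max |σ(b)|`,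
and a left tail, so it is short too; hence bounded factors have bounded length, contradicting
the hypothesis.
-/

open List

section Iterate

variable {β : Type*} (f : β → β)

theorem iterate_add_mul_eq {x : β} {m p : ℕ} (h : f^[m + p] x = f^[m] x) {n : ℕ} (hn : m ≤ n)
    (k : ℕ) : f^[n + p * k] x = f^[n] x := by
  have hstep : ∀ n', m ≤ n' → f^[n' + p] x = f^[n'] x := fun n' hn' => by
    obtain ⟨d, rfl⟩ := Nat.exists_eq_add_of_le hn'
    rw [show m + d + p = d + (m + p) by omega, Function.iterate_add_apply, h,
      ← Function.iterate_add_apply, Nat.add_comm]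
  induction k with
  | zero => rfl
  | succ k ih => rw [Nat.mul_succ, ← Nat.add_assoc, hstep _ (by omega), ih]

/-- A common multiple of the periods exceeding all the preperiods gives an idempotent iterate. -/
theorem exists_iterate_idempotent {ι : Type*} [Finite ι] (x : ι → β)
    (h : ∀ i, ∃ m p, 0 < p ∧ f^[m + p] (x i) = f^[m] (x i)) :
    ∃ N, 0 < N ∧ ∀ i, f^[N] (f^[N] (x i)) = f^[N] (x i) := by
  choose m p hp hper using h
  cases nonempty_fintype ι
  set N := ∏ i, p i * (m i + 1)
  have hN : 0 < N := Finset.prod_pos fun i _ => by have := hp i; positivity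
  refine ⟨N, hN, fun i => ?_⟩
  obtain ⟨k, hk⟩ : p i * (m i + 1) ∣ N := Finset.dvd_prod_of_mem _ (Finset.mem_univ i)
  have hle : m i ≤ N := by
    have := Nat.le_of_dvd hN ⟨k, hk⟩
    nlinarith [hp i]
  rw [← Function.iterate_add_apply, show N + N = N + p i * ((m i + 1) * k) by
    rw [← Nat.mul_assoc, ← hk]]
  exact iterate_add_mul_eq f (hper i) hle _

end Iterate

section Splits

variable {α : Type*} (p : α → Prop)

def SplitsAtLast (l : List α) (g : α) (t : List α) : Prop :=
  p g ∧ (∀ x ∈ t, ¬ p x) ∧ ∃ z, l = z ++ g :: t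

def SplitsAtFirst (l t : List α) (g : α) : Prop :=
  p g ∧ (∀ x ∈ t, ¬ p x) ∧ ∃ z, l = t ++ g :: z

variable {p} {l t t' v : List α} {g g' : α}

theorem splitsAtLast_reverse_iff :
    SplitsAtLast p l.reverse g t.reverse ↔ SplitsAtFirst p l t g := by
  simp only [SplitsAtLast, SplitsAtFirst, mem_reverse]
  refine and_congr_right fun _ => and_congr_right fun _ =>
    ⟨fun ⟨z, hz⟩ => ⟨z.reverse, ?_⟩, fun ⟨z, hz⟩ => ⟨z.reverse, by simp [hz]⟩⟩
  simpa using congrArg reverse hz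

theorem SplitsAtLast.mem (h : SplitsAtLast p l g t) : g ∈ l := by
  obtain ⟨-, -, z, rfl⟩ := h
  simp

theorem SplitsAtFirst.mem (h : SplitsAtFirst p l t g) : g ∈ l := by
  obtain ⟨-, -, z, rfl⟩ := h
  simp

theorem SplitsAtLast.exists : ∀ {l : List α}, (∃ x ∈ l, p x) → ∃ g t, SplitsAtLast p l g t
  | [], ⟨_, hx, _⟩ => absurd hx not_mem_nil
  | a :: l, ⟨x, hx, hpx⟩ => by
    by_cases hl : ∃ x ∈ l, p x
    · obtain ⟨g, t, hg, ht, z, rfl⟩ := SplitsAtLast.exists hl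
      exact ⟨g, t, hg, ht, a :: z, rfl⟩
    · push Not at hl
      obtain rfl | hx := mem_cons.1 hx
      · exact ⟨x, l, hpx, hl, [], rfl⟩
      · exact absurd hpx (hl x hx)

theorem SplitsAtFirst.exists (h : ∃ x ∈ l, p x) : ∃ t g, SplitsAtFirst p l t g := by
  obtain ⟨g, t, ht⟩ := SplitsAtLast.exists (l := l.reverse) (by simpa using h)
  exact ⟨t.reverse, g, splitsAtLast_reverse_iff.1 (by simpa using ht)⟩

theorem SplitsAtLast.length_le_of_suffix (h : SplitsAtLast p l g t) (hv : v <:+ l)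
    (hvp : ∀ x ∈ v, ¬ p x) : v.length ≤ t.length := by
  obtain ⟨hg, -, z, rfl⟩ := h
  by_contra! hlt
  have : g :: t <:+ v := suffix_of_suffix_length_le (suffix_append z _) hv (by simpa using hlt)
  exact hvp g (this.subset mem_cons_self) hg

theorem SplitsAtFirst.length_le_of_prefix (h : SplitsAtFirst p l t g) (hv : v <+: l)
    (hvp : ∀ x ∈ v, ¬ p x) : v.length ≤ t.length := by
  simpa using (splitsAtLast_reverse_iff.2 h).length_le_of_suffix (reverse_suffix.2 hv)
    (by simpa using hvp)

theorem SplitsAtLast.unique (h : SplitsAtLast p l g t) (h' : SplitsAtLast p l g' t') :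
    g = g' ∧ t = t' := by
  have hsuf : ∀ {g t}, SplitsAtLast p l g t → g :: t <:+ l := fun ⟨_, _, z, hz⟩ => ⟨z, hz.symm⟩
  have hlen : t.length = t'.length :=
    le_antisymm (h'.length_le_of_suffix ((suffix_cons g t).trans (hsuf h)) h.2.1)
      (h.length_le_of_suffix ((suffix_cons g' t').trans (hsuf h')) h'.2.1)
  have := (suffix_of_suffix_length_le (hsuf h) (hsuf h') (by simp [hlen])).eq_of_length
    (by simp [hlen])
  exact cons.inj this

theorem exists_flanked_of_append {x w y : List α} (hx : ∃ a ∈ x, p a) (hy : ∃ b ∈ y, p b)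
    (hw : ∀ a ∈ w, ¬ p a) : ∃ c w' d, p c ∧ p d ∧ (∀ a ∈ w', ¬ p a) ∧ w.length ≤ w'.length ∧
      c :: w' ++ [d] <:+: x ++ w ++ y := by
  obtain ⟨c, t₁, hc, ht₁, z₁, rfl⟩ := SplitsAtLast.exists hx
  obtain ⟨t₂, d, hd, ht₂, z₂, rfl⟩ := SplitsAtFirst.exists hy
  refine ⟨c, t₁ ++ w ++ t₂, d, hc, hd, ?_, by simp; omega, z₁, z₂, by simp⟩
  simp only [mem_append]
  rintro a ((ha | ha) | ha)
  exacts [ht₁ a ha, hw a ha, ht₂ a ha]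

end Splits

section Morphism

variable {α β : Type*} (σ : α → List β)

@[simp] theorem applyMorph_nil : applyMorph σ [] = [] := rfl

@[simp] theorem applyMorph_cons (a : α) (w : List α) :
    applyMorph σ (a :: w) = σ a ++ applyMorph σ w := by
  simp [applyMorph]

@[simp] theorem applyMorph_append (u v : List α) :
    applyMorph σ (u ++ v) = applyMorph σ u ++ applyMorph σ v := by
  simp [applyMorph]

theorem mem_applyMorph {w : List α} {b : β} : b ∈ applyMorph σ w ↔ ∃ a ∈ w, b ∈ σ a := by
  simp [applyMorph]

theorem length_applyMorph_le {K : ℕ} (hK : ∀ a, (σ a).length ≤ K) (w : List α) :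
    (applyMorph σ w).length ≤ K * w.length := by
  induction w with
  | nil => simp
  | cons a w ih => simp only [applyMorph_cons, length_append, length_cons]; nlinarith [hK a]

theorem length_le_length_applyMorph {σ : α → List β} (hne : Nonerasing σ) (w : List α) :
    w.length ≤ (applyMorph σ w).length := by
  induction w with
  | nil => simp
  | cons a w ih =>
    have := length_pos_iff.2 (hne a)
    simp only [applyMorph_cons, length_append, length_cons]
    omega

theorem applyMorph_eq_append_cons {x y : List β} {e : β} :
    ∀ {u : List α}, applyMorph σ u = x ++ e :: y → ∃ u₁ a u₂ s₀ s, u = u₁ ++ a :: u₂ ∧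
      σ a = s₀ ++ e :: s ∧ x = applyMorph σ u₁ ++ s₀ ∧ y = s ++ applyMorph σ u₂
  | [], h => by simp at h
  | a :: u, h => by
    rw [applyMorph_cons, eq_comm, append_eq_append_iff] at h
    obtain ⟨r, hr, hy⟩ | ⟨r, hx, hu⟩ := h
    · cases r with
      | nil =>
        obtain ⟨u₁, b, u₂, s₀, s, rfl, hb, hx', rfl⟩ :=
          applyMorph_eq_append_cons (x := []) (by simpa using hy.symm)
        exact ⟨a :: u₁, b, u₂, s₀, s, rfl, hb, by simp [hr, hx'], rfl⟩
      | cons e' r =>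
        obtain ⟨rfl, rfl⟩ := cons.inj hy
        exact ⟨[], a, u, x, r, rfl, hr, by simp, rfl⟩
    · obtain ⟨u₁, b, u₂, s₀, s, rfl, hb, rfl, rfl⟩ := applyMorph_eq_append_cons hu
      exact ⟨a :: u₁, b, u₂, s₀, s, rfl, hb, by simp [hx], rfl⟩

def reverseMorph : α → List β := fun a => (σ a).reverse

theorem applyMorph_reverseMorph (w : List α) :
    applyMorph (reverseMorph σ) w = (applyMorph σ w.reverse).reverse := by
  induction w with
  | nil => rfl
  | cons a w ih => simp [ih, reverseMorph]

theorem nonerasing_reverseMorph {σ : α → List β} (hne : Nonerasing σ) :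
    Nonerasing (reverseMorph σ) := fun a => by simpa [reverseMorph] using hne a

end Morphism

section Substitution

variable {A : Type*} (σ : A → List A)

theorem iterate_applyMorph_append (n : ℕ) (u v : List A) :
    (applyMorph σ)^[n] (u ++ v) = (applyMorph σ)^[n] u ++ (applyMorph σ)^[n] v := by
  induction n generalizing u v with
  | zero => rfl
  | succ n ih => simp only [Function.iterate_succ_apply, applyMorph_append, ih]

@[simp] theorem iterate_applyMorph_nil (n : ℕ) : (applyMorph σ)^[n] [] = [] := by
  simpa using iterate_applyMorph_append σ n [] []

theorem iterate_applyMorph_eq (n : ℕ) :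
    (applyMorph σ)^[n] = applyMorph fun a => (applyMorph σ)^[n] [a] := by
  funext w
  induction w with
  | nil => simp
  | cons a w ih => rw [← singleton_append, iterate_applyMorph_append, ih]; simp

theorem iterate_reverseMorph (n : ℕ) (w : List A) :
    (applyMorph (reverseMorph σ))^[n] w = ((applyMorph σ)^[n] w.reverse).reverse := by
  induction n generalizing w with
  | zero => simp
  | succ n ih => simp [Function.iterate_succ_apply', ih, applyMorph_reverseMorph]

theorem length_iterate_le_of_mem (n : ℕ) {a : A} {u : List A} (ha : a ∈ u) :
    ((applyMorph σ)^[n] [a]).length ≤ ((applyMorph σ)^[n] u).length := by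
  obtain ⟨s, t, rfl⟩ := append_of_mem ha
  rw [show s ++ a :: t = s ++ [a] ++ t by simp, iterate_applyMorph_append,
    iterate_applyMorph_append]
  simp only [length_append]
  omega

theorem monotone_length_iterate {σ : A → List A} (hne : Nonerasing σ) (w : List A) :
    Monotone fun n => ((applyMorph σ)^[n] w).length :=
  monotone_nat_of_le_succ fun n => by
    rw [Function.iterate_succ_apply']
    exact length_le_length_applyMorph hne _

theorem growingLetter_reverseMorph : GrowingLetter (reverseMorph σ) = GrowingLetter σ := by
  funext a
  simp [GrowingLetter, iterate_reverseMorph]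

theorem not_growingLetter_of_mem {a b : A} (ha : ¬ GrowingLetter σ a) (hb : b ∈ σ a) :
    ¬ GrowingLetter σ b := by
  simp only [GrowingLetter, not_forall, not_exists, not_le] at ha ⊢
  obtain ⟨M, hM⟩ := ha
  refine ⟨M, fun n => lt_of_le_of_lt (length_iterate_le_of_mem σ n hb) ?_⟩
  simpa [Function.iterate_succ_apply, applyMorph] using hM (n + 1)

theorem not_growingLetter_of_mem_iterate {u : List A} (hu : ∀ a ∈ u, ¬ GrowingLetter σ a) (n : ℕ) :
    ∀ b ∈ (applyMorph σ)^[n] u, ¬ GrowingLetter σ b := by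
  induction n with
  | zero => exact hu
  | succ n ih =>
    intro b hb
    rw [Function.iterate_succ_apply', mem_applyMorph] at hb
    obtain ⟨a, ha, hb⟩ := hb
    exact not_growingLetter_of_mem σ (ih a ha) hb

theorem exists_bound_of_not_growingLetter {u : List A} (hu : ∀ a ∈ u, ¬ GrowingLetter σ a) :
    ∃ M, ∀ n, ((applyMorph σ)^[n] u).length ≤ M := by
  induction u with
  | nil => exact ⟨0, by simp⟩
  | cons a u ih =>
    obtain ⟨M, hM⟩ := ih fun b hb => hu b (mem_cons_of_mem a hb)
    have ha := hu a mem_cons_self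
    simp only [GrowingLetter, not_forall, not_exists, not_le] at ha
    obtain ⟨M', hM'⟩ := ha
    refine ⟨M' + M, fun n => ?_⟩
    rw [← singleton_append, iterate_applyMorph_append, length_append]
    exact Nat.add_le_add (hM' n).le (hM n)

theorem exists_growingLetter_mem {a : A} (ha : GrowingLetter σ a) :
    ∃ b ∈ σ a, GrowingLetter σ b := by
  by_contra! h
  obtain ⟨M, hM⟩ := exists_bound_of_not_growingLetter σ h
  obtain ⟨n, hn⟩ := ha (M + 2)
  cases n with
  | zero => simp at hn
  | succ n =>
    have := hM n
    rw [Function.iterate_succ_apply] at hn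
    simp [applyMorph] at hn
    omega

theorem exists_growingLetter_mem_iterate {u : List A} (hu : ∃ a ∈ u, GrowingLetter σ a) (n : ℕ) :
    ∃ b ∈ (applyMorph σ)^[n] u, GrowingLetter σ b := by
  induction n with
  | zero => exact hu
  | succ n ih =>
    obtain ⟨a, ha, hga⟩ := ih
    obtain ⟨b, hb, hgb⟩ := exists_growingLetter_mem σ hga
    exact ⟨b, by rw [Function.iterate_succ_apply', mem_applyMorph]; exact ⟨a, ha, hb⟩, hgb⟩

def IdempotentOnBounded : Prop := ∀ a, ¬ GrowingLetter σ a → applyMorph σ (σ a) = σ a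

variable {σ}

theorem applyMorph_applyMorph_of_idem
    (hidem : IdempotentOnBounded σ) {u : List A}
    (hu : ∀ a ∈ u, ¬ GrowingLetter σ a) : applyMorph σ (applyMorph σ u) = applyMorph σ u := by
  induction u with
  | nil => rfl
  | cons a u ih =>
    simp only [applyMorph_cons, applyMorph_append, hidem a (hu a mem_cons_self),
      ih fun b hb => hu b (mem_cons_of_mem a hb)]

theorem iterate_eq_applyMorph_of_idem
    (hidem : IdempotentOnBounded σ) {u : List A}
    (hu : ∀ a ∈ u, ¬ GrowingLetter σ a) : ∀ {n}, 0 < n → (applyMorph σ)^[n] u = applyMorph σ u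
  | 1, _ => rfl
  | n + 2, _ => by
    rw [Function.iterate_succ_apply', iterate_eq_applyMorph_of_idem hidem hu (by omega),
      applyMorph_applyMorph_of_idem hidem hu]

theorem length_iterate_le_of_idem (hne : Nonerasing σ)
    (hidem : IdempotentOnBounded σ) {u : List A}
    (hu : ∀ a ∈ u, ¬ GrowingLetter σ a) (n : ℕ) :
    ((applyMorph σ)^[n] u).length ≤ (applyMorph σ u).length := by
  rcases n.eq_zero_or_pos with rfl | hn
  · exact length_le_length_applyMorph hne u
  · rw [iterate_eq_applyMorph_of_idem hidem hu hn]

theorem SplitsAtLast.iterate {u t t' : List A} {g g' : A} {n : ℕ}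
    (h : SplitsAtLast (GrowingLetter σ) u g t)
    (h' : SplitsAtLast (GrowingLetter σ) ((applyMorph σ)^[n] [g]) g' t') :
    SplitsAtLast (GrowingLetter σ) ((applyMorph σ)^[n] u) g' (t' ++ (applyMorph σ)^[n] t) := by
  obtain ⟨-, ht, z, rfl⟩ := h
  obtain ⟨hg', ht', z', hz'⟩ := h'
  refine ⟨hg', ?_, (applyMorph σ)^[n] z ++ z', ?_⟩
  · simp only [mem_append]
    rintro x (hx | hx)
    exacts [ht' x hx, not_growingLetter_of_mem_iterate σ ht n x hx]
  · rw [← singleton_append, iterate_applyMorph_append, iterate_applyMorph_append, hz']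
    simp

theorem SplitsAtFirst.iterate {u t t' : List A} {g g' : A} {n : ℕ}
    (h : SplitsAtFirst (GrowingLetter σ) u t g)
    (h' : SplitsAtFirst (GrowingLetter σ) ((applyMorph σ)^[n] [g]) t' g') :
    SplitsAtFirst (GrowingLetter σ) ((applyMorph σ)^[n] u) ((applyMorph σ)^[n] t ++ t') g' := by
  obtain ⟨-, ht, z, rfl⟩ := h
  obtain ⟨hg', ht', z', hz'⟩ := h'
  refine ⟨hg', ?_, z' ++ (applyMorph σ)^[n] z, ?_⟩
  · simp only [mem_append]
    rintro x (hx | hx)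
    exacts [not_growingLetter_of_mem_iterate σ ht n x hx, ht' x hx]
  · rw [← singleton_append, iterate_applyMorph_append, iterate_applyMorph_append, hz']
    simp

end Substitution

section Language

variable {A : Type*}

def language (σ : A → List A) (a : A) : Set (List A) := {v | ∃ n, v <:+: (applyMorph σ)^[n] [a]}

variable {σ : A → List A} {a : A}

theorem mem_language_of_infix {u v : List A} (h : v <:+: u) (hu : u ∈ language σ a) :
    v ∈ language σ a :=
  let ⟨n, hn⟩ := hu
  ⟨n, h.trans hn⟩

theorem iterate_mem_language {u : List A} (hu : u ∈ language σ a) (n : ℕ) :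
    (applyMorph σ)^[n] u ∈ language σ a := by
  obtain ⟨m, s, t, hst⟩ := hu
  refine ⟨n + m, (applyMorph σ)^[n] s, (applyMorph σ)^[n] t, ?_⟩
  rw [Function.iterate_add_apply, ← hst, iterate_applyMorph_append, iterate_applyMorph_append]

theorem mem_language_reverseMorph {v : List A} :
    v ∈ language (reverseMorph σ) a ↔ v.reverse ∈ language σ a := by
  simp only [language, Set.mem_ofPred_eq, iterate_reverseMorph, reverse_singleton]
  exact exists_congr fun n => by rw [← reverse_infix, reverse_reverse]

theorem OccursAt.infix_of_prefixOf {X : ℕ → A} {u v : List A} {i : ℕ} (hv : OccursAt v X i)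
    (hu : PrefixOf u X) (hlen : i + v.length ≤ u.length) : v <:+: u := by
  have : v = (u.drop i).take v.length := by
    refine ext_getElem (by simp; omega) fun j h₁ h₂ => ?_
    have e₁ := hv j h₁
    have e₂ := hu (i + j) (by omega)
    simp only [get_eq_getElem, Nat.zero_add] at e₁ e₂
    simp [← e₁, e₂]
  rw [this]
  exact (take_prefix _ _).isInfix.trans (drop_suffix _ _).isInfix

theorem PrefixOf.occursAt_of_append {X : ℕ → A} {s v t : List A} (h : PrefixOf (s ++ v ++ t) X) :
    OccursAt v X s.length := by
  intro j hj
  have := h (s.length + j) (by simp; omega)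
  simpa [getElem_append_right, getElem_append_left, hj] using this

theorem factorOf_iff_mem_language {X : ℕ → A} (hX : IsFixedPoint σ a X) (ha : GrowingLetter σ a)
    {v : List A} : FactorOf v X ↔ v ∈ language σ a := by
  constructor
  · rintro ⟨i, hi⟩
    obtain ⟨n, hn⟩ := ha (i + v.length)
    exact ⟨n, hi.infix_of_prefixOf (hX n) hn⟩
  · rintro ⟨n, s, t, hst⟩
    exact ⟨s.length, PrefixOf.occursAt_of_append (hst ▸ hX n)⟩

end Language

section Pumping

theorem exists_iterate_eq_append_replicate {α : Type*} {T : List α → List α}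
    (hT : ∀ u v, T (u ++ v) = T u ++ T v) {g : α} {z s U : List α} (hg : T [g] = z ++ g :: s)
    (hs : T s = U) (hU : T U = U) (k : ℕ) :
    ∃ z', T^[k + 1] [g] = z' ++ g :: (s ++ (replicate k U).flatten) := by
  have hrep : ∀ k, T (replicate k U).flatten = (replicate k U).flatten := by
    intro k
    induction k with
    | zero => simpa using hT [] []
    | succ k ih => rw [replicate_succ, flatten_cons, hT, hU, ih]
  induction k with
  | zero => exact ⟨z, by simpa using hg⟩
  | succ k ih =>
    obtain ⟨z', hz'⟩ := ih
    refine ⟨T z' ++ z, ?_⟩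
    rw [Function.iterate_succ_apply', hz',
      show z' ++ g :: (s ++ (replicate k U).flatten) = z' ++ [g] ++ s ++ (replicate k U).flatten
        by simp, hT, hT, hT, hg, hs, hrep, replicate_succ, flatten_cons]
    simp

variable {A : Type*}

/-- Left pumps are the right pumps of `reverseMorph σ`. -/
def HasRightPump (σ : A → List A) (a : A) : Prop :=
  ∃ g p s, [g] ∈ language σ a ∧ 0 < p ∧ s ≠ [] ∧
    SplitsAtLast (GrowingLetter σ) ((applyMorph σ)^[p] [g]) g s

variable {σ : A → List A} {a : A}

theorem HasRightPump.exists_powers (hne : Nonerasing σ)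
    (hidem : IdempotentOnBounded σ) (h : HasRightPump σ a) :
    ∃ U, U ≠ [] ∧ ∀ k, (replicate k U).flatten ∈ language σ a := by
  obtain ⟨g, p, s, hg, hp, hs, -, hsb, z, hz⟩ := h
  refine ⟨applyMorph σ s,
    ne_nil_of_length_pos ((length_pos_iff.2 hs).trans_le (length_le_length_applyMorph hne s)),
    fun k => ?_⟩
  have hU : (applyMorph σ)^[p] (applyMorph σ s) = applyMorph σ s := by
    rw [iterate_eq_applyMorph_of_idem hidem (u := applyMorph σ s)
      (not_growingLetter_of_mem_iterate σ hsb 1) hp, applyMorph_applyMorph_of_idem hidem hsb]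
  obtain ⟨z', hz'⟩ := exists_iterate_eq_append_replicate (iterate_applyMorph_append σ p) hz
    (iterate_eq_applyMorph_of_idem hidem hsb hp) hU k
  rw [← Function.iterate_mul] at hz'
  exact mem_language_of_infix ⟨z' ++ g :: s, [], by rw [hz']; simp⟩
    (iterate_mem_language hg (p * (k + 1)))

end Pumping

section TailBound

variable {A : Type*} {σ : A → List A} {a : A}

theorem IdempotentOnBounded.reverseMorph (hidem : IdempotentOnBounded σ) :
    IdempotentOnBounded (reverseMorph σ) := fun b hb => by
  rw [growingLetter_reverseMorph] at hb
  rw [applyMorph_reverseMorph]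
  simp only [_root_.reverseMorph, reverse_reverse, hidem b hb]

theorem growingLetter_of_mem_iterate {b c : A} {n : ℕ} (hb : b ∈ (applyMorph σ)^[n] [c])
    (hg : GrowingLetter σ b) : GrowingLetter σ c := by
  by_contra h
  exact not_growingLetter_of_mem_iterate σ (fun x hx => mem_singleton.1 hx ▸ h) n b hb hg

theorem SplitsAtLast.eq_nil_of_periodic (hne : Nonerasing σ) {g g' : A} {p n : ℕ} {t : List A}
    (hg : SplitsAtLast (GrowingLetter σ) ((applyMorph σ)^[p] [g]) g [])
    (h : SplitsAtLast (GrowingLetter σ) ((applyMorph σ)^[n] [g]) g' t) (hp : 0 < p) : t = [] := by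
  have hper : ∀ k, SplitsAtLast (GrowingLetter σ) ((applyMorph σ)^[p * k] [g]) g [] := by
    intro k
    induction k with
    | zero => exact ⟨hg.1, by simp, [], rfl⟩
    | succ k ih =>
      have h' := ih.iterate hg
      rw [← Function.iterate_add_apply, iterate_applyMorph_nil, append_nil] at h'
      rwa [show p * (k + 1) = p + p * k by ring]
  obtain ⟨g'', t'', h''⟩ := SplitsAtLast.exists
    (exists_growingLetter_mem_iterate σ ⟨g', mem_singleton_self _, h.1⟩ (p * n - n))
  have hn : p * n - n + n = p * n := Nat.sub_add_cancel (Nat.le_mul_of_pos_left n hp)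
  have h' := h.iterate h''
  rw [← Function.iterate_add_apply, hn] at h'
  have hnil := (append_eq_nil_iff.1 ((h'.unique (hper n)).2)).2
  have : t.length ≤ ((applyMorph σ)^[p * n - n] t).length :=
    monotone_length_iterate hne t (Nat.zero_le _)
  rw [hnil] at this
  simpa using this

/-- Along `n ↦ σ^n(c)` the last growing letter eventually cycles; without right pumps the cycle
contributes no tail, so from then on the tail is the stable image of a fixed bounded word. -/
theorem exists_rightTail_bound_of_mem [Finite A] (hne : Nonerasing σ)
    (hidem : IdempotentOnBounded σ) (hpump : ¬ HasRightPump σ a)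
    {c : A} (hc : [c] ∈ language σ a) (hcg : GrowingLetter σ c) :
    ∃ B, ∀ j g t, SplitsAtLast (GrowingLetter σ) ((applyMorph σ)^[j] [c]) g t → t.length ≤ B := by
  have hsplit : ∀ {d}, GrowingLetter σ d → ∀ j, ∃ g t,
      SplitsAtLast (GrowingLetter σ) ((applyMorph σ)^[j] [d]) g t := fun hd j =>
    SplitsAtLast.exists (exists_growingLetter_mem_iterate σ ⟨_, mem_singleton_self _, hd⟩ j)
  choose g t ht using hsplit hcg
  obtain ⟨i, i', hii', hgi⟩ :=
    Set.finite_univ.exists_lt_map_eq_of_forall_mem (f := g) fun _ => Set.mem_univ _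
  obtain ⟨g₁, s, hs⟩ := hsplit (ht i).1 (i' - i)
  have hcycle := (ht i).iterate hs
  rw [← Function.iterate_add_apply, Nat.sub_add_cancel hii'.le] at hcycle
  obtain ⟨rfl, -⟩ := hcycle.unique (ht i')
  rw [← hgi] at hs
  have hs₀ : s = [] := by
    by_contra hs₀
    exact hpump ⟨g i, i' - i, s, mem_language_of_infix ((singleton_infix_iff _ _).2 (ht i).mem)
      (iterate_mem_language hc i), by omega, hs₀, hs⟩
  subst hs₀
  refine ⟨((applyMorph σ)^[i] [c]).length + (applyMorph σ (t i)).length, fun j g' t' h' => ?_⟩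
  by_cases hj : j ≤ i
  · obtain ⟨-, -, z, hz⟩ := h'
    have h₁ : t'.length ≤ ((applyMorph σ)^[j] [c]).length := by rw [hz]; simp; omega
    have h₂ : ((applyMorph σ)^[j] [c]).length ≤ ((applyMorph σ)^[i] [c]).length :=
      monotone_length_iterate hne [c] hj
    omega
  · obtain ⟨g₂, t₂, h₂⟩ := hsplit (ht i).1 (j - i)
    have hlater := (ht i).iterate h₂
    rw [← Function.iterate_add_apply, Nat.sub_add_cancel (by omega),
      hs.eq_nil_of_periodic hne h₂ (by omega), nil_append] at hlater
    rw [(h'.unique hlater).2]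
    have := length_iterate_le_of_idem hne hidem (ht i).2.1 (j - i)
    omega

theorem exists_rightTail_bound [Finite A] (hne : Nonerasing σ)
    (hidem : IdempotentOnBounded σ) (hpump : ¬ HasRightPump σ a) :
    ∃ B, ∀ c, [c] ∈ language σ a → GrowingLetter σ c → ∀ j g t,
      SplitsAtLast (GrowingLetter σ) ((applyMorph σ)^[j] [c]) g t → t.length ≤ B := by
  have h : ∀ c, ∃ B, [c] ∈ language σ a → GrowingLetter σ c → ∀ j g t,
      SplitsAtLast (GrowingLetter σ) ((applyMorph σ)^[j] [c]) g t → t.length ≤ B := fun c => by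
    by_cases hc : [c] ∈ language σ a ∧ GrowingLetter σ c
    · obtain ⟨B, hB⟩ := exists_rightTail_bound_of_mem hne hidem hpump hc.1 hc.2
      exact ⟨B, fun _ _ => hB⟩
    · exact ⟨0, fun h₁ h₂ => absurd ⟨h₁, h₂⟩ hc⟩
  choose B hB using h
  obtain ⟨M, hM⟩ := (Set.finite_range B).bddAbove
  exact ⟨M, fun c h₁ h₂ j g t h₃ => (hB c h₁ h₂ j g t h₃).trans (hM ⟨c, rfl⟩)⟩

theorem exists_leftTail_bound [Finite A] (hne : Nonerasing σ)
    (hidem : IdempotentOnBounded σ)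
    (hpump : ¬ HasRightPump (reverseMorph σ) a) :
    ∃ B, ∀ c, [c] ∈ language σ a → GrowingLetter σ c → ∀ j t g,
      SplitsAtFirst (GrowingLetter σ) ((applyMorph σ)^[j] [c]) t g → t.length ≤ B := by
  obtain ⟨B, hB⟩ :=
    exists_rightTail_bound (nonerasing_reverseMorph hne) hidem.reverseMorph hpump
  refine ⟨B, fun c hc hcg j t g h => ?_⟩
  rw [growingLetter_reverseMorph] at hB
  simpa using hB c (mem_language_reverseMorph.2 (by simpa using hc)) hcg j g t.reverse
    (by rw [iterate_reverseMorph, reverse_singleton]; exact splitsAtLast_reverse_iff.2 h)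

end TailBound

section Gaps

variable {A : Type*} {σ : A → List A} {a : A}

theorem exists_desubstitution {K : ℕ} (hK : ∀ b, (σ b).length ≤ K) {u w : List A} {c d : A}
    (hin : c :: w ++ [d] <:+: applyMorph σ u) (hw : ∀ x ∈ w, ¬ GrowingLetter σ x)
    (hc : GrowingLetter σ c) (hd : GrowingLetter σ d) (hwK : K ≤ w.length) :
    ∃ c' m d' ρ ℓ, c' :: m ++ [d'] <:+: u ∧ (∀ x ∈ m, ¬ GrowingLetter σ x) ∧
      SplitsAtLast (GrowingLetter σ) (σ c') c ρ ∧ SplitsAtFirst (GrowingLetter σ) (σ d') ℓ d ∧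
      w = ρ ++ applyMorph σ m ++ ℓ := by
  obtain ⟨x, y, hxy⟩ := hin
  obtain ⟨u₁, c', u₂, z₁, ρ, rfl, hc', -, hρ⟩ :=
    applyMorph_eq_append_cons σ (x := x) (e := c) (y := w ++ d :: y) (by rw [← hxy]; simp)
  have hρK : ρ.length < K := by
    have := hK c'
    rw [hc'] at this
    simp only [length_append, length_cons] at this
    omega
  obtain ⟨w', rfl⟩ : ρ <+: w :=
    prefix_of_prefix_length_le ⟨_, hρ.symm⟩ (prefix_append w (d :: y)) (by omega)
  obtain ⟨m, d', u₃, ℓ, z₂, rfl, hd', rfl, -⟩ :=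
    applyMorph_eq_append_cons σ (x := w') (by simpa using hρ.symm)
  refine ⟨c', m, d', ρ, ℓ, ⟨u₁, u₃, by simp⟩, fun x hx hgx => ?_,
    ⟨hc, fun x hx => hw x (by simp [hx]), z₁, hc'⟩, ⟨hd, fun x hx => hw x (by simp [hx]), z₂, hd'⟩,
    by simp⟩
  obtain ⟨b, hb, hgb⟩ := exists_growingLetter_mem σ hgx
  exact hw b (mem_append_right _ (mem_append_left _ ((mem_applyMorph σ).2 ⟨x, hx, hb⟩))) hgb

theorem exists_gap_decomposition {K : ℕ} (hK : ∀ b, (σ b).length ≤ K) (n : ℕ) :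
    ∀ {c d : A} {w : List A}, c :: w ++ [d] <:+: (applyMorph σ)^[n] [a] →
      GrowingLetter σ c → GrowingLetter σ d → (∀ x ∈ w, ¬ GrowingLetter σ x) →
      ∃ j c' m d' ρ ℓ, [c'] ∈ language σ a ∧ [d'] ∈ language σ a ∧ m.length < K ∧
        (∀ x ∈ m, ¬ GrowingLetter σ x) ∧
        SplitsAtLast (GrowingLetter σ) ((applyMorph σ)^[j] [c']) c ρ ∧
        SplitsAtFirst (GrowingLetter σ) ((applyMorph σ)^[j] [d']) ℓ d ∧
        w = ρ ++ (applyMorph σ)^[j] m ++ ℓ := by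
  induction n with
  | zero =>
    intro c d w hin hc hd hw
    have := hin.length_le
    simp only [length_cons, length_append, Function.iterate_zero, id_eq] at this
    omega
  | succ n ih =>
    intro c d w hin hc hd hw
    have hmem : ∀ {x}, x ∈ c :: w ++ [d] → [x] ∈ language σ a := fun hx =>
      ⟨n + 1, ((singleton_infix_iff _ _).2 hx).trans hin⟩
    by_cases hwK : w.length < K
    · exact ⟨0, c, w, d, [], [], hmem mem_cons_self, hmem (by simp), hwK, hw,
        ⟨hc, by simp, [], rfl⟩, ⟨hd, by simp, [], rfl⟩, by simp⟩
    rw [Function.iterate_succ_apply'] at hin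
    obtain ⟨c₁, m₁, d₁, ρ₁, ℓ₁, hin₁, hm₁, hρ₁, hℓ₁, rfl⟩ :=
      exists_desubstitution hK hin hw hc hd (by omega)
    have hρ₁' : SplitsAtLast (GrowingLetter σ) ((applyMorph σ)^[1] [c₁]) c ρ₁ := by
      simpa using hρ₁
    have hℓ₁' : SplitsAtFirst (GrowingLetter σ) ((applyMorph σ)^[1] [d₁]) ℓ₁ d := by
      simpa using hℓ₁
    obtain ⟨j, c', m, d', ρ, ℓ, hc', hd', hmK, hm, hρ, hℓ, rfl⟩ :=
      ih hin₁ (growingLetter_of_mem_iterate hρ₁'.mem hc)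
        (growingLetter_of_mem_iterate hℓ₁'.mem hd) hm₁
    refine ⟨j + 1, c', m, d', ρ₁ ++ applyMorph σ ρ, applyMorph σ ℓ ++ ℓ₁, hc', hd', hmK, hm,
      ?_, ?_, by simp [Function.iterate_succ_apply']⟩
    · have h := hρ.iterate hρ₁'
      rwa [← Function.iterate_add_apply, Nat.add_comm] at h
    · have h := hℓ.iterate hℓ₁'
      rwa [← Function.iterate_add_apply, Nat.add_comm] at h

theorem exists_gap_bound [Finite A] (hne : Nonerasing σ)
    (hidem : IdempotentOnBounded σ) (hR : ¬ HasRightPump σ a)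
    (hL : ¬ HasRightPump (reverseMorph σ) a) :
    ∃ B, ∀ {c d : A} {w : List A}, c :: w ++ [d] ∈ language σ a → GrowingLetter σ c →
      GrowingLetter σ d → (∀ x ∈ w, ¬ GrowingLetter σ x) → w.length ≤ B := by
  obtain ⟨K, hK⟩ := (Set.finite_range fun b => (σ b).length).bddAbove
  obtain ⟨BR, hBR⟩ := exists_rightTail_bound hne hidem hR
  obtain ⟨BL, hBL⟩ := exists_leftTail_bound hne hidem hL
  refine ⟨BR + K * K + BL, @fun c d w ⟨n, hn⟩ hc hd hw => ?_⟩
  obtain ⟨j, c', m, d', ρ, ℓ, hc', hd', hmK, hm, hρ, hℓ, rfl⟩ :=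
    exists_gap_decomposition (fun b => hK ⟨b, rfl⟩) n hn hc hd hw
  have h₁ := hBR c' hc' (growingLetter_of_mem_iterate hρ.mem hc) j c ρ hρ
  have h₂ := hBL d' hd' (growingLetter_of_mem_iterate hℓ.mem hd) j ℓ d hℓ
  have h₃ : ((applyMorph σ)^[j] m).length ≤ K * K :=
    (length_iterate_le_of_idem hne hidem hm j).trans
      ((length_applyMorph_le σ (fun b => hK ⟨b, rfl⟩) m).trans (Nat.mul_le_mul_left K hmK.le))
  simp only [length_append]
  omega

/-- A bounded factor of `σ^n(a)` lies between two growing letters, or else inside the bounded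
head or the bounded tail of `σ^n(a)`. -/
theorem exists_length_bound [Finite A] (hne : Nonerasing σ)
    (hidem : IdempotentOnBounded σ) (ha : GrowingLetter σ a)
    (hR : ¬ HasRightPump σ a) (hL : ¬ HasRightPump (reverseMorph σ) a) :
    ∃ B, ∀ w ∈ language σ a, (∀ x ∈ w, ¬ GrowingLetter σ x) → w.length ≤ B := by
  obtain ⟨BG, hBG⟩ := exists_gap_bound hne hidem hR hL
  obtain ⟨BR, hBR⟩ := exists_rightTail_bound hne hidem hR
  obtain ⟨BL, hBL⟩ := exists_leftTail_bound hne hidem hL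
  have ha' : [a] ∈ language σ a := ⟨0, infix_refl _⟩
  refine ⟨BG + BR + BL, fun w ⟨n, x, y, hxy⟩ hw => ?_⟩
  have hgrow := exists_growingLetter_mem_iterate σ ⟨a, mem_singleton_self a, ha⟩ n
  by_cases hx : ∃ b ∈ x, GrowingLetter σ b
  · by_cases hy : ∃ b ∈ y, GrowingLetter σ b
    · obtain ⟨c, w', d, hc, hd, hw', hlen, hin⟩ := exists_flanked_of_append hx hy hw
      have := hBG (mem_language_of_infix (hxy ▸ hin) ⟨n, infix_refl _⟩) hc hd hw'
      omega
    · push Not at hy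
      obtain ⟨g, t, ht⟩ := SplitsAtLast.exists hgrow
      have h₁ := ht.length_le_of_suffix (v := w ++ y) ⟨x, by rw [← hxy, append_assoc]⟩
        (by simp only [mem_append]; rintro b (hb | hb); exacts [hw b hb, hy b hb])
      have h₂ := hBR a ha' ha n g t ht
      simp only [length_append] at h₁
      omega
  · push Not at hx
    obtain ⟨t, g, ht⟩ := SplitsAtFirst.exists hgrow
    have h₁ := ht.length_le_of_prefix (v := x ++ w) ⟨y, hxy⟩
      (by simp only [mem_append]; rintro b (hb | hb); exacts [hx b hb, hw b hb])
    have h₂ := hBL a ha' ha n t g ht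
    simp only [length_append] at h₁
    omega

theorem exists_powers_mem_language [Finite A] (hne : Nonerasing σ)
    (hidem : IdempotentOnBounded σ) (ha : GrowingLetter σ a)
    (hlong : ∀ n, ∃ w ∈ language σ a, (∀ x ∈ w, ¬ GrowingLetter σ x) ∧ n ≤ w.length) :
    ∃ U, U ≠ [] ∧ ∀ k, (replicate k U).flatten ∈ language σ a := by
  by_cases hR : HasRightPump σ a
  · exact hR.exists_powers hne hidem
  by_cases hL : HasRightPump (reverseMorph σ) a
  · obtain ⟨U, hU, hpow⟩ := hL.exists_powers (nonerasing_reverseMorph hne) hidem.reverseMorph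
    refine ⟨U.reverse, by simpa using hU, fun k => ?_⟩
    simpa [reverse_flatten] using mem_language_reverseMorph.1 (hpow k)
  obtain ⟨B, hB⟩ := exists_length_bound hne hidem ha hR hL
  obtain ⟨w, hw, hwb, hlen⟩ := hlong (B + 1)
  have := hB w hw hwb
  omega

end Gaps

section Power

variable {A : Type*} (φ : A → List A)

def morphPow (N : ℕ) : A → List A := fun a => (applyMorph φ)^[N] [a]

theorem applyMorph_morphPow (N : ℕ) : applyMorph (morphPow φ N) = (applyMorph φ)^[N] :=
  (iterate_applyMorph_eq φ N).symm

theorem iterate_morphPow (N t : ℕ) :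
    (applyMorph (morphPow φ N))^[t] = (applyMorph φ)^[N * t] := by
  rw [applyMorph_morphPow, Function.iterate_mul]

theorem exists_morphPow_idem [Finite A] : ∃ N, 0 < N ∧ ∀ a, ¬ GrowingLetter φ a →
    applyMorph (morphPow φ N) (morphPow φ N a) = morphPow φ N a := by
  have h : ∀ b : {a // ¬ GrowingLetter φ a}, ∃ m p, 0 < p ∧
      (applyMorph φ)^[m + p] [b.1] = (applyMorph φ)^[m] [b.1] := by
    rintro ⟨b, hb⟩
    simp only [GrowingLetter, not_forall, not_exists, not_le] at hb
    obtain ⟨M, hM⟩ := hb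
    obtain ⟨m, n, hmn, heq⟩ := (List.finite_length_lt A M).exists_lt_map_eq_of_forall_mem
      (f := fun n => (applyMorph φ)^[n] [b]) hM
    exact ⟨m, n - m, by omega, by rw [Nat.add_sub_cancel' hmn.le]; exact heq.symm⟩
  obtain ⟨N, hN, hidem⟩ := exists_iterate_idempotent (applyMorph φ)
    (fun b : {a // ¬ GrowingLetter φ a} => [b.1]) h
  exact ⟨N, hN, fun a ha => by rw [applyMorph_morphPow]; exact hidem ⟨a, ha⟩⟩

variable {φ}

theorem nonerasing_morphPow (hne : Nonerasing φ) (N : ℕ) : Nonerasing (morphPow φ N) :=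
  fun a h => by
    have : ([a] : List A).length ≤ ((applyMorph φ)^[N] [a]).length :=
      monotone_length_iterate hne [a] (Nat.zero_le N)
    rw [show (applyMorph φ)^[N] [a] = [] from h] at this
    simp at this

theorem growingLetter_morphPow_iff (hne : Nonerasing φ) {N : ℕ} (hN : 0 < N) {a : A} :
    GrowingLetter (morphPow φ N) a ↔ GrowingLetter φ a := by
  simp only [GrowingLetter, iterate_morphPow]
  refine ⟨fun h M => ⟨N * (h M).choose, (h M).choose_spec⟩, fun h M => ?_⟩
  obtain ⟨n, hn⟩ := h M
  exact ⟨n, hn.trans (monotone_length_iterate hne [a] (Nat.le_mul_of_pos_left n hN))⟩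

theorem IsFixedPoint.morphPow {a : A} {X : ℕ → A} (hX : IsFixedPoint φ a X) (N : ℕ) :
    IsFixedPoint (morphPow φ N) a X := fun t => by
  rw [iterate_morphPow]
  exact hX _

theorem PhiBounded.not_growingLetter (hne : Nonerasing φ) {w : List A} (h : PhiBounded φ w)
    {a : A} (ha : a ∈ w) : ¬ GrowingLetter φ a := by
  obtain ⟨m, p, hp, hper⟩ := h
  intro hg
  obtain ⟨n, hn⟩ := hg (((applyMorph φ)^[m] w).length + 1)
  have h₁ := length_iterate_le_of_mem φ n ha
  have h₂ : ((applyMorph φ)^[n] w).length ≤ ((applyMorph φ)^[m + p * n] w).length :=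
    monotone_length_iterate hne w (by nlinarith)
  rw [iterate_add_mul_eq _ (hper m le_rfl) le_rfl] at h₂
  omega

theorem Prolongable.growingLetter {a : A} (h : Prolongable φ a) : GrowingLetter φ a := by
  obtain ⟨v, hv, hvne⟩ := h
  have key : ∀ n, n + 1 ≤ ((applyMorph φ)^[n] [a]).length := by
    intro n
    induction n with
    | zero => simp
    | succ n ih =>
      rw [Function.iterate_succ_apply, show applyMorph φ [a] = [a] ++ v by simp [hv],
        iterate_applyMorph_append, length_append]
      have := length_pos_iff.2 (hvne n)
      omega
  exact fun N => ⟨N, (Nat.le_succ N).trans (key N)⟩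

end Power

theorem Set.Infinite.exists_le_length {A : Type*} [Finite A] {s : Set (List A)} (hs : s.Infinite)
    (n : ℕ) : ∃ w ∈ s, n ≤ w.length := by
  by_contra! h
  exact hs ((List.finite_length_lt A n).subset h)

/-- if there are infinitely many `φ`-bounded factors, then some
nonempty word `U` has all its powers as factors of the fixed point. -/
theorem powers_factor_of_infinite_bounded_factors {A : Type*} [Fintype A]
    (φ : A → List A) (a₁ : A) (hne : Nonerasing φ) (hpro : Prolongable φ a₁)
    (X : ℕ → A) (hX : IsFixedPoint φ a₁ X)
    (hinf : {w : List A | FactorOf w X ∧ PhiBounded φ w}.Infinite) :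
    ∃ U : List A, U ≠ [] ∧ ∀ k : ℕ, FactorOf (List.replicate k U).flatten X := by
  obtain ⟨N, hN, hidem⟩ := exists_morphPow_idem φ
  have hgrow : ∀ b, GrowingLetter (morphPow φ N) b ↔ GrowingLetter φ b := fun b =>
    growingLetter_morphPow_iff hne hN
  have ha₁ : GrowingLetter (morphPow φ N) a₁ := (hgrow a₁).2 hpro.growingLetter
  have hfac : ∀ v, FactorOf v X ↔ v ∈ language (morphPow φ N) a₁ := fun v =>
    factorOf_iff_mem_language (hX.morphPow N) ha₁
  obtain ⟨U, hU, hpow⟩ := exists_powers_mem_language (nonerasing_morphPow hne N)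
    (fun b hb => hidem b (mt (hgrow b).2 hb)) ha₁ fun n => by
      obtain ⟨w, ⟨hwX, hwb⟩, hw⟩ := hinf.exists_le_length n
      exact ⟨w, (hfac w).1 hwX, fun b hb => mt (hgrow b).1 (hwb.not_growingLetter hne hb), hw⟩
  exact ⟨U, hU, fun k => (hfac _).2 (hpow k)⟩
end

section
/- Let φ be a nonerasing substitution on a nonempty finite alphabet A and suppose every letter a has a growth order (d a, θ a). Then the growth orders of all letters are equal (i.e., (d a, θ a) = (d b, θ b) for all a b : A) if and only if the growth orders of all recurrent letters are equal (i.e., (d a, θ a) = (d b, θ b) for all recurrent a b : A). -/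
/-! Growth orders `(d, θ)` are compared lexicographically on `(θ, d)`, which is the order of
growth of `n ^ d * θ ^ n`. Every letter `x` of `φ a` grows at most as fast as `a`, since
`φ^n(x)` is a factor of `φ^(n+1)(a)`; and as `|φ^(n+1)(a)|` is the sum of the `|φ^n(x)|`, they
cannot all grow strictly slower, so some letter of `φ a` has the growth order of `a`. Following
such letters from `a` eventually cycles in the finite alphabet, and the letters on that cycle are
recurrent with the growth order of `a`. -/

open Filter Asymptotics

section Words

variable {A : Type*} (φ : A → List A)

theorem iterate_applyMorph_eq_flatMap (n : ℕ) (w : List A) :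
    (applyMorph φ)^[n] w = w.flatMap fun x => (applyMorph φ)^[n] [x] := by
  induction n generalizing w with
  | zero => simp
  | succ n ih =>
    rw [Function.iterate_succ_apply', ih]
    simp only [Function.iterate_succ_apply']
    exact List.flatMap_assoc

theorem length_iterate_applyMorph (n : ℕ) (w : List A) :
    ((applyMorph φ)^[n] w).length = (w.map fun x => ((applyMorph φ)^[n] [x]).length).sum := by
  rw [iterate_applyMorph_eq_flatMap, List.length_flatMap]

theorem length_iterate_le_of_mem_s12 {w : List A} {b : A} (hb : b ∈ w) (n : ℕ) :
    ((applyMorph φ)^[n] [b]).length ≤ ((applyMorph φ)^[n] w).length := by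
  rw [length_iterate_applyMorph φ n w]
  exact List.le_sum_of_mem (List.mem_map_of_mem hb)

theorem iterate_succ_applyMorph_singleton (n : ℕ) (a : A) :
    (applyMorph φ)^[n + 1] [a] = (applyMorph φ)^[n] (φ a) := by
  rw [Function.iterate_succ_apply]
  simp [applyMorph]

theorem iterate_mem_iterate_applyMorph {f : A → A} (hf : ∀ b, f b ∈ φ b) (m : ℕ) (b : A) :
    f^[m] b ∈ (applyMorph φ)^[m] [b] := by
  induction m generalizing b with
  | zero => simp
  | succ m ih =>
    rw [iterate_succ_applyMorph_singleton, Function.iterate_succ_apply,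
      iterate_applyMorph_eq_flatMap, List.mem_flatMap]
    exact ⟨f b, hf b, ih (f b)⟩

end Words

theorem Asymptotics.IsLittleO.list_sum {α ι E F : Type*} [SeminormedAddCommGroup E]
    [SeminormedAddCommGroup F] {l : Filter α} {g : α → F} (s : List ι) {f : ι → α → E} (h : ∀ i ∈ s, f i =o[l] g) :
    (fun x => (s.map fun i => f i x).sum) =o[l] g := by
  induction s with
  | nil => simpa using isLittleO_zero g l
  | cons i s ih =>
    simpa using (h i List.mem_cons_self).add (ih fun j hj => h j (List.mem_cons_of_mem i hj))

theorem Function.exists_isPeriodicPt_iterate {α : Type*} [Finite α] (f : α → α) (x : α) :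
    ∃ m k, 0 < k ∧ IsPeriodicPt f k (f^[m] x) := by
  obtain ⟨m, n, hlt, heq⟩ : ∃ m n, m < n ∧ f^[m] x = f^[n] x := by
    obtain ⟨m, n, heq, hne⟩ : ∃ m n, f^[m] x = f^[n] x ∧ m ≠ n := by
      simpa [Function.Injective] using not_injective_infinite_finite (f^[·] x)
    rcases hne.lt_or_gt with h | h
    exacts [⟨m, n, h, heq⟩, ⟨n, m, h, heq.symm⟩]
  refine ⟨m, n - m, by omega, ?_⟩
  rw [IsPeriodicPt, IsFixedPt, ← Function.iterate_add_apply, Nat.sub_add_cancel hlt.le, heq]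

def polyExpGrowth (d : ℕ) (θ : ℝ) (n : ℕ) : ℝ :=
  (n : ℝ) ^ d * θ ^ n

section PolyExpGrowth

variable {d d' : ℕ} {θ θ' : ℝ}

theorem polyExpGrowth_pos (hθ : 0 < θ) {n : ℕ} (hn : 0 < n) : 0 < polyExpGrowth d θ n := by
  unfold polyExpGrowth
  positivity

theorem norm_polyExpGrowth (hθ : 0 ≤ θ) (n : ℕ) : ‖polyExpGrowth d θ n‖ = polyExpGrowth d θ n :=
  Real.norm_of_nonneg (by unfold polyExpGrowth; positivity)

theorem not_polyExpGrowth_isLittleO_self (hθ : 0 < θ) :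
    ¬ polyExpGrowth d θ =o[atTop] polyExpGrowth d θ :=
  isLittleO_irrefl <| (eventually_gt_atTop 0).frequently.mono fun _ hn =>
    (polyExpGrowth_pos hθ hn).ne'

theorem polyExpGrowth_isLittleO_of_toLex_lt (hθ : 0 ≤ θ) (h : toLex (θ, d) < toLex (θ', d')) :
    polyExpGrowth d θ =o[atTop] polyExpGrowth d' θ' := by
  unfold polyExpGrowth
  rcases Prod.Lex.toLex_lt_toLex.1 h with hθθ' | ⟨rfl, hd⟩
  · refine (isLittleO_pow_const_mul_const_pow_const_pow_of_norm_lt d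
      (by rwa [Real.norm_of_nonneg hθ])).trans_isBigO (IsBigO.of_bound 1 ?_)
    filter_upwards [eventually_ge_atTop 1] with n hn
    simp only [norm_mul, norm_pow, Real.norm_natCast, one_mul]
    exact le_mul_of_one_le_left (by positivity) (one_le_pow₀ (by exact_mod_cast hn))
  · exact ((isLittleO_pow_pow_atTop_of_lt hd).comp_tendsto
      tendsto_natCast_atTop_atTop).mul_isBigO (isBigO_refl _ _)

theorem toLex_le_of_polyExpGrowth_isBigO (hθ : 0 < θ) (hθ' : 0 ≤ θ')
    (h : polyExpGrowth d θ =O[atTop] polyExpGrowth d' θ') : toLex (θ, d) ≤ toLex (θ', d') := by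
  by_contra! hlt
  exact not_polyExpGrowth_isLittleO_self hθ
    (h.trans_isLittleO (polyExpGrowth_isLittleO_of_toLex_lt hθ' hlt))

theorem polyExpGrowth_succ_isTheta (hθ : 0 < θ) :
    (fun n => polyExpGrowth d θ (n + 1)) =Θ[atTop] polyExpGrowth d θ := by
  have hnorm := norm_polyExpGrowth (d := d) hθ.le
  refine ⟨IsBigO.of_bound (2 ^ d * θ) ?_, IsBigO.of_bound θ⁻¹ (Eventually.of_forall fun n => ?_)⟩
  · filter_upwards [eventually_ge_atTop 1] with n hn
    have hsucc : ((n + 1 : ℕ) : ℝ) ^ d ≤ 2 ^ d * (n : ℝ) ^ d := by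
      rw [← mul_pow]
      gcongr
      push_cast
      linarith [(Nat.one_le_cast (α := ℝ)).2 hn]
    rw [hnorm, hnorm, polyExpGrowth, polyExpGrowth, pow_succ]
    calc ((n + 1 : ℕ) : ℝ) ^ d * (θ ^ n * θ) ≤ 2 ^ d * (n : ℝ) ^ d * (θ ^ n * θ) := by gcongr
      _ = 2 ^ d * θ * ((n : ℝ) ^ d * θ ^ n) := by ring
  · rw [hnorm, hnorm, polyExpGrowth, polyExpGrowth, pow_succ, le_inv_mul_iff₀ hθ]
    calc θ * ((n : ℝ) ^ d * θ ^ n) ≤ θ * (((n + 1 : ℕ) : ℝ) ^ d * θ ^ n) := by gcongr; simp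
      _ = ((n + 1 : ℕ) : ℝ) ^ d * (θ ^ n * θ) := by ring

end PolyExpGrowth

section GrowthOrder

open Function

variable {A : Type*} {φ : A → List A}

theorem HasGrowthOrder.isTheta {a : A} {d : ℕ} {θ : ℝ} (h : HasGrowthOrder φ a d θ) :
    (fun n => (((applyMorph φ)^[n] [a]).length : ℝ)) =Θ[atTop] polyExpGrowth d θ := by
  obtain ⟨hθ, c, C, hc, -, hbound⟩ := h
  refine ⟨IsBigO.of_bound C ?_, IsBigO.of_bound c⁻¹ ?_⟩ <;>
    filter_upwards [eventually_ge_atTop 1] with n hn <;>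
    rw [norm_polyExpGrowth (zero_le_one.trans hθ), Real.norm_natCast, polyExpGrowth]
  · exact mul_assoc C _ _ ▸ (hbound n hn).2
  · rw [le_inv_mul_iff₀ hc, ← mul_assoc]
    exact (hbound n hn).1

theorem HasGrowthOrder.toLex_le_of_mem {a x : A} {d d' : ℕ} {θ θ' : ℝ}
    (ha : HasGrowthOrder φ a d θ) (hx : HasGrowthOrder φ x d' θ') (hmem : x ∈ φ a) :
    toLex (θ', d') ≤ toLex (θ, d) := by
  have hθ : 0 < θ := zero_lt_one.trans_le ha.1
  refine toLex_le_of_polyExpGrowth_isBigO (zero_lt_one.trans_le hx.1) hθ.le ?_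
  calc polyExpGrowth d' θ' =O[atTop] fun n => (((applyMorph φ)^[n] [x]).length : ℝ) :=
        hx.isTheta.symm.isBigO
    _ =O[atTop] fun n => (((applyMorph φ)^[n + 1] [a]).length : ℝ) :=
        isBigO_of_le _ fun n => by
          simpa [iterate_succ_applyMorph_singleton] using length_iterate_le_of_mem_s12 φ hmem n
    _ =O[atTop] fun n => polyExpGrowth d θ (n + 1) :=
        ha.isTheta.isBigO.comp_tendsto (tendsto_add_atTop_nat 1)
    _ =O[atTop] polyExpGrowth d θ := (polyExpGrowth_succ_isTheta hθ).isBigO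

theorem exists_mem_hasGrowthOrder_eq (d : A → ℕ) (θ : A → ℝ)
    (hord : ∀ a, HasGrowthOrder φ a (d a) (θ a)) (a : A) :
    ∃ x ∈ φ a, d x = d a ∧ θ x = θ a := by
  by_contra! hne
  have hθ : 0 < θ a := zero_lt_one.trans_le (hord a).1
  have hlt (x : A) (hx : x ∈ φ a) : toLex (θ x, d x) < toLex (θ a, d a) :=
    ((hord a).toLex_le_of_mem (hord x) hx).lt_of_ne fun h => by
      simp only [toLex_inj, Prod.mk.injEq] at h
      exact hne x hx h.2 h.1
  have hsmall : (fun n => (((applyMorph φ)^[n + 1] [a]).length : ℝ)) =o[atTop]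
      polyExpGrowth (d a) (θ a) := by
    simp only [iterate_succ_applyMorph_singleton, length_iterate_applyMorph φ _ (φ a),
      Nat.cast_list_sum, List.map_map]
    exact IsLittleO.list_sum _ fun x hx => (hord x).isTheta.isBigO.trans_isLittleO
      (polyExpGrowth_isLittleO_of_toLex_lt (zero_le_one.trans (hord x).1) (hlt x hx))
  have hlarge : polyExpGrowth (d a) (θ a) =O[atTop]
      fun n => (((applyMorph φ)^[n + 1] [a]).length : ℝ) :=
    (polyExpGrowth_succ_isTheta hθ).symm.isBigO.trans
      ((hord a).isTheta.symm.isBigO.comp_tendsto (tendsto_add_atTop_nat 1))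
  exact not_polyExpGrowth_isLittleO_self hθ (hlarge.trans_isLittleO hsmall)

theorem RecurrentLetter.of_isPeriodicPt {f : A → A} (hf : ∀ b, f b ∈ φ b) {k : ℕ} (hk : 0 < k)
    {r : A} (hr : IsPeriodicPt f k r) : RecurrentLetter φ r :=
  ⟨k, hk, by simpa only [hr.eq] using iterate_mem_iterate_applyMorph φ hf k r⟩

theorem exists_recurrentLetter_hasGrowthOrder_eq [Finite A] (d : A → ℕ) (θ : A → ℝ)
    (hord : ∀ a, HasGrowthOrder φ a (d a) (θ a)) (a : A) :
    ∃ r, RecurrentLetter φ r ∧ d r = d a ∧ θ r = θ a := by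
  choose f hf hfd hfθ using exists_mem_hasGrowthOrder_eq d θ hord
  obtain ⟨m, k, hk, hper⟩ := exists_isPeriodicPt_iterate f a
  have hinv : (fun b => (d b, θ b)) ∘ f^[m] = fun b => (d b, θ b) :=
    iterate_invariant (funext fun b => by simp [hfd, hfθ]) m
  exact ⟨f^[m] a, .of_isPeriodicPt hf hk hper, Prod.ext_iff.1 (congrFun hinv a)⟩

end GrowthOrder

theorem growth_orders_equal_iff_recurrent_general {A : Type*} [Fintype A]
    (φ : A → List A)
    (d : A → ℕ) (θ : A → ℝ)
    (hord : ∀ a : A, HasGrowthOrder φ a (d a) (θ a)) :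
    (∀ a b : A, d a = d b ∧ θ a = θ b) ↔
    (∀ a b : A, RecurrentLetter φ a → RecurrentLetter φ b →
      d a = d b ∧ θ a = θ b) := by
  refine ⟨fun h a b _ _ => h a b, fun h a b => ?_⟩
  obtain ⟨r, hr, hdr, hθr⟩ := exists_recurrentLetter_hasGrowthOrder_eq d θ hord a
  obtain ⟨s, hs, hds, hθs⟩ := exists_recurrentLetter_hasGrowthOrder_eq d θ hord b
  rw [← hdr, ← hθr, ← hds, ← hθs]
  exact h r s hr hs

/-- all letters have equal growth orders iff all recurrent letters
have equal growth orders. -/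
theorem growth_orders_equal_iff_recurrent {A : Type*} [Fintype A] [Nonempty A]
    (φ : A → List A) (hne : Nonerasing φ)
    (d : A → ℕ) (θ : A → ℝ)
    (hord : ∀ a : A, HasGrowthOrder φ a (d a) (θ a)) :
    (∀ a b : A, d a = d b ∧ θ a = θ b) ↔
    (∀ a b : A, RecurrentLetter φ a → RecurrentLetter φ b →
      d a = d b ∧ θ a = θ b) :=
  growth_orders_equal_iff_recurrent_general φ d θ hord
end

section
/- Let W : ℕ → B be an infinite word and P K : ℝ with P ≥ 1 and 0 < K < 1 such that: (i) for all factors u₁, u₂ of W, if (u₂ : List B).length ≥ P · u₁.length then u₁ is a factor of u₂; and (ii) for every factor u of W and any two distinct starting positions i ≠ j of occurrences of u in W, |i − j| ≥ K · u.length. Let m : ℕ with m ≥ 1 and (1 + 3·P) / m < K. Then there do not exist N ≥ 1, finite words A and B' with A.length = B'.length = N, and finite words C₀, C₁, …, C_m with C₀.length < C₁.length < ⋯ < C_m.length and C_m.length ≤ N / m, such that A ++ Cᵢ ++ B' is a factor of W for every i ≤ m. -/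
/-!
The `m + 1` words `A ++ Cᵢ ++ B'` all fit into one prefix of `W` of length about
`P (2N + |C_m|) ≤ 3PN`, by hypothesis (i). They must start at pairwise distinct positions: two of
them starting at the same place would give two occurrences of `B'` at distance `< |C_m| ≤ N/m`,
which (ii) forbids. These `m + 1` starting positions are also occurrences of `A`, hence pairwise
`K N` apart by (ii), so they spread over a length at least `m K N > (1 + 3P) N`, more than the
prefix allows.
-/

open Finset

lemma card_sub_one_mul_le_of_separated {S : Finset ℕ} (hS : S.Nonempty) {d L : ℝ}
    (hsep : ∀ x ∈ S, ∀ y ∈ S, x ≠ y → d ≤ |(x : ℝ) - y|) (hL : ∀ x ∈ S, (x : ℝ) ≤ L) :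
    ((#S - 1 : ℕ) : ℝ) * d ≤ L := by
  induction S using Finset.induction_on_max generalizing L with
  | empty => exact absurd hS (by simp)
  | insert a s hlt ih =>
    have haL := hL a (mem_insert_self a s)
    rcases s.eq_empty_or_nonempty with rfl | hs
    · simpa using (Nat.cast_nonneg a).trans haL
    -- every point of `s` lies at least `d` below `a`, so `s` fits under `L - d`
    have hsL : ((#s - 1 : ℕ) : ℝ) * d ≤ L - d := by
      refine ih hs (fun x hx y hy ↦ hsep x (mem_insert_of_mem hx) y (mem_insert_of_mem hy))
        fun x hx ↦ ?_
      have hxa := hsep x (mem_insert_of_mem hx) a (mem_insert_self a s) (hlt x hx).ne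
      rw [abs_sub_comm, abs_of_nonneg (sub_nonneg.mpr (by exact_mod_cast (hlt x hx).le))] at hxa
      linarith
    have hcard : #(insert a s) - 1 = (#s - 1) + 1 := by
      rw [card_insert_of_notMem fun ha ↦ (hlt a ha).false]
      have := card_pos.mpr hs
      omega
    rw [hcard, Nat.cast_succ]
    linarith

section Occurrences

variable {α : Type*} {W : ℕ → α}

lemma OccursAt.of_append_left {x y : List α} {i : ℕ} (h : OccursAt (x ++ y) W i) :
    OccursAt x W i := by
  intro j hj
  simpa [List.getElem_append_left hj] using h j (by simp; omega)

lemma OccursAt.of_append_right {x y : List α} {i : ℕ} (h : OccursAt (x ++ y) W i) :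
    OccursAt y W (i + x.length) := by
  intro j hj
  simpa [Nat.add_assoc] using h (x.length + j) (by simp; omega)

lemma OccursAt.of_infix {u v : List α} {i : ℕ} (huv : u <:+: v) (h : OccursAt v W i) :
    ∃ k, OccursAt u W (i + k) ∧ k + u.length ≤ v.length := by
  obtain ⟨s, t, rfl⟩ := huv
  refine ⟨s.length, ?_, by simp⟩
  rw [List.append_assoc] at h
  exact h.of_append_right.of_append_left

lemma occursAt_map_range (W : ℕ → α) (T : ℕ) : OccursAt ((List.range T).map W) W 0 := by
  intro j hj
  simp

lemma exists_occursAt_add_length_le {P : ℝ}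
    (hinfix : ∀ u₁ u₂ : List α, FactorOf u₁ W → FactorOf u₂ W →
      P * (u₁.length : ℝ) ≤ (u₂.length : ℝ) → u₁ <:+: u₂)
    {u : List α} (hu : FactorOf u W) {T : ℕ} (hT : P * (u.length : ℝ) ≤ T) :
    ∃ q, OccursAt u W q ∧ q + u.length ≤ T := by
  have hpre := occursAt_map_range W T
  have huv := hinfix u _ hu ⟨0, hpre⟩ (by simpa using hT)
  obtain ⟨k, hk, hlen⟩ := hpre.of_infix huv
  exact ⟨k, by simpa using hk, by simpa using hlen⟩

lemma le_abs_length_sub_of_occursAt_append {K : ℝ}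
    (hsep : ∀ u : List α, ∀ i j : ℕ, OccursAt u W i → OccursAt u W j → i ≠ j →
      K * (u.length : ℝ) ≤ |(i : ℝ) - (j : ℝ)|)
    {a b c c' : List α} {q : ℕ} (h : OccursAt (a ++ c ++ b) W q)
    (h' : OccursAt (a ++ c' ++ b) W q) (hc : c.length ≠ c'.length) :
    K * (b.length : ℝ) ≤ |(c.length : ℝ) - c'.length| := by
  have hb := hsep b _ _ h.of_append_right h'.of_append_right (by simp; omega)
  convert hb using 2
  push_cast [List.length_append]
  ring

lemma injective_of_occursAt_append {K : ℝ}
    (hsep : ∀ u : List α, ∀ i j : ℕ, OccursAt u W i → OccursAt u W j → i ≠ j →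
      K * (u.length : ℝ) ≤ |(i : ℝ) - (j : ℝ)|)
    {ι : Type*} {a b : List α} {C : ι → List α} {q : ι → ℕ}
    (hq : ∀ i, OccursAt (a ++ C i ++ b) W (q i)) (hC : Function.Injective fun i ↦ (C i).length)
    (hshort : ∀ i, ((C i).length : ℝ) < K * b.length) :
    Function.Injective q := fun i j hij ↦ by
  by_contra hne
  have hle := le_abs_length_sub_of_occursAt_append hsep (hq i) (hij ▸ hq j) (hC.ne hne)
  have hlt := abs_sub_lt_of_nonneg_of_lt (Nat.cast_nonneg _) (hshort i) (Nat.cast_nonneg _)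
    (hshort j)
  linarith

lemma mul_le_of_occursAt_injective {K : ℝ}
    (hsep : ∀ u : List α, ∀ i j : ℕ, OccursAt u W i → OccursAt u W j → i ≠ j →
      K * (u.length : ℝ) ≤ |(i : ℝ) - (j : ℝ)|)
    {m : ℕ} {u : List α} {q : Fin (m + 1) → ℕ} (hq_inj : Function.Injective q)
    (hq : ∀ i, OccursAt u W (q i)) {L : ℝ} (hL : ∀ i, (q i : ℝ) ≤ L) :
    m * (K * u.length) ≤ L := by
  have := card_sub_one_mul_le_of_separated (univ_nonempty.image q)
    (d := K * u.length) (by simpa using fun i j hij ↦ hsep u _ _ (hq i) (hq j) hij)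
    (by simpa using hL)
  rwa [card_image_of_injective _ hq_inj, card_univ, Fintype.card_fin, Nat.add_sub_cancel] at this

end Occurrences

theorem no_family_of_close_factors_general {β : Type*} (W : ℕ → β) (P K : ℝ)
    (hP : 1 ≤ P)
    (h1 : ∀ u₁ u₂ : List β, FactorOf u₁ W → FactorOf u₂ W →
      P * (u₁.length : ℝ) ≤ (u₂.length : ℝ) → u₁ <:+: u₂)
    (h2 : ∀ u : List β, ∀ i j : ℕ, OccursAt u W i → OccursAt u W j → i ≠ j →
      K * (u.length : ℝ) ≤ |(i : ℝ) - (j : ℝ)|)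
    (m : ℕ) (hm : 1 ≤ m) (hmK : (1 + 3 * P) / (m : ℝ) < K) :
    ¬ ∃ (N : ℕ) (Aw Bw : List β) (Cs : Fin (m + 1) → List β),
        1 ≤ N ∧ Aw.length = N ∧ Bw.length = N ∧
        StrictMono (fun i : Fin (m + 1) => (Cs i).length) ∧
        ((Cs (Fin.last m)).length : ℝ) ≤ (N : ℝ) / (m : ℝ) ∧
        (∀ i : Fin (m + 1), FactorOf (Aw ++ Cs i ++ Bw) W) := by
  rintro ⟨N, Aw, Bw, Cs, hN, hA, hB, hmono, hCm, hfac⟩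
  have hmpos : (0 : ℝ) < m := by exact_mod_cast hm
  have hKm : 1 + 3 * P < K * m := by rwa [div_lt_iff₀ hmpos] at hmK
  set cm := (Cs (Fin.last m)).length
  have hcmN : (cm : ℝ) * m ≤ N := by rwa [← le_div_iff₀ hmpos]
  have hcm : (cm : ℝ) ≤ N :=
    (le_mul_of_one_le_right (Nat.cast_nonneg _) (by exact_mod_cast hm)).trans hcmN
  have hc : ∀ i, ((Cs i).length : ℝ) ≤ cm := fun i ↦ by
    exact_mod_cast hmono.monotone (Fin.le_last i)
  have hlen : ∀ i, ((Aw ++ Cs i ++ Bw).length : ℝ) = 2 * N + (Cs i).length := fun i ↦ by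
    push_cast [List.length_append, hA, hB]; ring
  set T := ⌈P * (2 * N + cm)⌉₊
  have hocc : ∀ i, ∃ q, OccursAt (Aw ++ Cs i ++ Bw) W q ∧ q + (Aw ++ Cs i ++ Bw).length ≤ T :=
    fun i ↦ exists_occursAt_add_length_le h1 (hfac i) <| (Nat.le_ceil _).trans' <| by
      rw [hlen i]; gcongr; exact_mod_cast hc i
  choose q hq hqT using hocc
  have hKmN := mul_lt_mul_of_pos_right hKm (by exact_mod_cast hN : (0 : ℝ) < N)
  have hcK : (cm : ℝ) < K * N := by nlinarith
  have hq_inj : Function.Injective q := injective_of_occursAt_append h2 hq hmono.injective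
    fun i ↦ hB ▸ (hc i).trans_lt hcK
  have hspread : m * (K * N) ≤ T - 2 * N := by
    have := mul_le_of_occursAt_injective h2 hq_inj
      (fun i ↦ (hq i).of_append_left.of_append_left) (L := T - 2 * N) fun i ↦ by
        have : (q i : ℝ) + (Aw ++ Cs i ++ Bw).length ≤ T := by exact_mod_cast hqT i
        linarith [hlen i, Nat.cast_nonneg (α := ℝ) (Cs i).length]
    rwa [hA] at this
  have hT : (T : ℝ) < P * (2 * N + cm) + 1 := Nat.ceil_lt_add_one (by positivity)
  have hNR : (1 : ℝ) ≤ N := by exact_mod_cast hN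
  nlinarith [mul_le_mul_of_nonneg_left hcm (by linarith : (0 : ℝ) ≤ P)]

/-- the pigeonhole argument of the paper: no family
`A ++ Cᵢ ++ B'` of factors with slowly growing middles can exist. -/
theorem no_family_of_close_factors {β : Type*} (W : ℕ → β) (P K : ℝ)
    (hP : 1 ≤ P) (hK0 : 0 < K) (hK1 : K < 1)
    (h1 : ∀ u₁ u₂ : List β, FactorOf u₁ W → FactorOf u₂ W →
      P * (u₁.length : ℝ) ≤ (u₂.length : ℝ) → u₁ <:+: u₂)
    (h2 : ∀ u : List β, ∀ i j : ℕ, OccursAt u W i → OccursAt u W j → i ≠ j →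
      K * (u.length : ℝ) ≤ |(i : ℝ) - (j : ℝ)|)
    (m : ℕ) (hm : 1 ≤ m) (hmK : (1 + 3 * P) / (m : ℝ) < K) :
    ¬ ∃ (N : ℕ) (Aw Bw : List β) (Cs : Fin (m + 1) → List β),
        1 ≤ N ∧ Aw.length = N ∧ Bw.length = N ∧
        StrictMono (fun i : Fin (m + 1) => (Cs i).length) ∧
        ((Cs (Fin.last m)).length : ℝ) ≤ (N : ℝ) / (m : ℝ) ∧
        (∀ i : Fin (m + 1), FactorOf (Aw ++ Cs i ++ Bw) W) :=
  no_family_of_close_factors_general W P K hP h1 h2 m hm hmK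
end
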